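/- arXiv:1701.01780 — 2 statements merged into one kernel-verified Lean document; each statement's English description precedes it below -/
import Mathlib

section
/- For each z ∈ ℂ with Im(z) > 0 and constants a ∈ ℝ, b > 0, the equation α = 1/(a − z − b·α) has exactly one solution α ∈ ℂ with Im(α) > 0. -/
/-!
Clearing the denominator, a solution with `Im α > 0` is a root of `b α² - w α + 1 = 0`,
where `w = a - z` has `Im w < 0`. If `α` is one root then `w / b - α` is the other, and their
product is the positive real `1 / b`; since `Im (r / x) = -r Im x / |x|²`, two roots never lie in
the same open half-plane. Their imaginary parts add up to `Im w / b < 0`, so they are not both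
real, and exactly one of them lies in the upper half-plane.
-/

section CanonicalEquation

variable {K : Type*} [Field K] {w b α β : K}

theorem mul_eq_inv_of_ne_of_mul_sub_mul_eq_one (hαβ : α ≠ β)
    (hα : α * (w - b * α) = 1) (hβ : β * (w - b * β) = 1) : α * β = b⁻¹ := by
  have hw : w = b * (α + β) := by
    apply mul_left_cancel₀ (sub_ne_zero.mpr hαβ)
    linear_combination hα - hβ
  apply eq_inv_of_mul_eq_one_left
  linear_combination hα - α * hw

theorem div_sub_self_of_mul_sub_mul_eq_one (hb : b ≠ 0) (hα : α * (w - b * α) = 1) :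
    (w / b - α) * (w - b * (w / b - α)) = 1 ∧ α * (w / b - α) = b⁻¹ := by
  have hw : b * (w / b - α) = w - b * α := by rw [mul_sub, mul_div_cancel₀ w hb]
  constructor
  · rw [hw]
    linear_combination hα + α * hw
  · apply eq_inv_of_mul_eq_one_left
    linear_combination hα + α * hw

open Polynomial in
theorem exists_mul_sub_mul_eq_one [IsAlgClosed K] (hb : b ≠ 0) :
    ∃ α : K, α * (w - b * α) = 1 := by
  obtain ⟨α, hα⟩ := IsAlgClosed.exists_root (C b * X ^ 2 + C (-w) * X + C 1)
    (by rw [degree_quadratic hb]; decide)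
  refine ⟨α, ?_⟩
  simp only [IsRoot, eval_add, eval_mul, eval_C, eval_pow, eval_X] at hα
  linear_combination -hα

end CanonicalEquation

namespace Complex

theorem im_neg_of_mul_eq_ofReal {x y : ℂ} {r : ℝ} (hr : 0 < r) (h : x * y = r)
    (hx : 0 < x.im) : y.im < 0 := by
  have hx0 : x ≠ 0 := fun h0 => hx.ne' (by simp [h0])
  have hy : y = r * x⁻¹ := by rw [← h]; field_simp
  rw [hy, im_ofReal_mul, inv_im]
  exact mul_neg_of_pos_of_neg hr (div_neg_of_neg_of_pos (neg_neg_of_pos hx) (normSq_pos.mpr hx0))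

theorem im_pos_of_mul_eq_ofReal {x y : ℂ} {r : ℝ} (hr : 0 < r) (h : x * y = r)
    (hx : x.im < 0) : 0 < y.im := by
  simpa using im_neg_of_mul_eq_ofReal (x := -x) (y := -y) hr (by rw [neg_mul_neg, h]) (by simpa)

variable {w α β : ℂ} {b : ℝ}

theorem eq_of_mul_sub_mul_eq_one_of_im_pos (hb : 0 < b) (hα : α * (w - b * α) = 1)
    (hβ : β * (w - b * β) = 1) (hαim : 0 < α.im) (hβim : 0 < β.im) : α = β := by
  by_contra hαβ
  have hprod := mul_eq_inv_of_ne_of_mul_sub_mul_eq_one hαβ hα hβ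
  rw [← ofReal_inv] at hprod
  exact (im_neg_of_mul_eq_ofReal (inv_pos.mpr hb) hprod hαim).not_gt hβim

theorem exists_mul_sub_mul_eq_one_im_pos (hb : 0 < b) (hw : w.im < 0) :
    ∃ α : ℂ, α * (w - b * α) = 1 ∧ 0 < α.im := by
  have hb0 : (b : ℂ) ≠ 0 := ofReal_ne_zero.mpr hb.ne'
  obtain ⟨α, hα⟩ := exists_mul_sub_mul_eq_one (w := w) hb0
  obtain ⟨hα', hprod⟩ := div_sub_self_of_mul_sub_mul_eq_one hb0 hα
  rw [← ofReal_inv] at hprod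
  rcases lt_or_ge α.im 0 with hαim | hαim
  · exact ⟨w / b - α, hα', im_pos_of_mul_eq_ofReal (inv_pos.mpr hb) hprod hαim⟩
  · have hsum : α.im + (w / b - α).im = w.im / b := by simp
    have hα'im : (w / b - α).im < 0 := by linarith [div_neg_of_neg_of_pos hw hb]
    rw [mul_comm] at hprod
    exact ⟨α, hα, im_pos_of_mul_eq_ofReal (inv_pos.mpr hb) hprod hα'im⟩

end Complex

/-- For each `z ∈ ℂ` with `Im z > 0` and constants `a ∈ ℝ`, `b > 0`, the
self-consistent canonical equation `α = 1 / (a - z - b α)` has exactly one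
solution `α ∈ ℂ` with `Im α > 0`. -/
theorem canonical_equation_unique_solution
    (z : ℂ) (hz : 0 < z.im) (a b : ℝ) (hb : 0 < b) :
    ∃! α : ℂ, 0 < α.im ∧ α = ((a : ℂ) - z - (b : ℂ) * α)⁻¹ := by
  have hsol : ∀ α : ℂ, 0 < α.im →
      (α = ((a : ℂ) - z - b * α)⁻¹ ↔ α * ((a : ℂ) - z - b * α) = 1) := fun α hα =>
    ((mul_eq_one_iff_inv_eq₀ fun h => hα.ne' (by simp [h])).trans inv_eq_iff_eq_inv).symm
  obtain ⟨α, hα, hαim⟩ :=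
    Complex.exists_mul_sub_mul_eq_one_im_pos (w := (a : ℂ) - z) hb (by simpa using hz)
  refine ⟨α, ⟨hαim, (hsol α hαim).mpr hα⟩, fun β ⟨hβim, hβ⟩ => ?_⟩
  exact Complex.eq_of_mul_sub_mul_eq_one_of_im_pos hb ((hsol β hβim).mp hβ) hα hβim hαim
end

section
/- For z ∈ ℂ with Im(z) > 0, a ∈ ℝ, and b > 0, the unique solution with positive imaginary part of α = 1/(a − z − bα) is α = ((a − z) − √((a − z)² − 4b)) / (2b), where the branch of the square root is chosen so that Im(α) > 0; moreover |α| ≤ 1/Im(z). -/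
/-!
Clearing the denominator in `α = 1 / (c - bα)` gives `bα² - cα + 1 = 0`, and `s := c - 2bα` is
then a square root of the discriminant `c² - 4b` with `α = (c - s) / (2b)`. For the bound,
`Im (a - z - bα) = -Im z - b Im α ≤ -Im z`, so `|α| = 1 / |a - z - bα| ≤ 1 / Im z`.
-/

section Quadratic

variable {K : Type*} [Field K]

theorem quadratic_of_eq_inv_sub_mul {b c α : K} (hα₀ : α ≠ 0) (hα : α = (c - b * α)⁻¹) :
    b * α ^ 2 - c * α + 1 = 0 := by
  have hden : c - b * α ≠ 0 := fun h => hα₀ (by rw [hα, h, inv_zero])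
  have hmul : (c - b * α) * α = 1 := by nth_rewrite 2 [hα]; exact mul_inv_cancel₀ hden
  linear_combination -hmul

theorem exists_sq_eq_discrim_of_quadratic [NeZero (2 : K)] {b c α : K} (hb : b ≠ 0)
    (hq : b * α ^ 2 - c * α + 1 = 0) :
    ∃ s : K, s ^ 2 = c ^ 2 - 4 * b ∧ α = (c - s) / (2 * b) :=
  ⟨c - 2 * b * α, by linear_combination 4 * b * hq, by field_simp; ring⟩

end Quadratic

theorem Complex.norm_inv_le_of_le_abs_im {w : ℂ} {t : ℝ} (ht : 0 < t) (hw : t ≤ |w.im|) :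
    ‖w⁻¹‖ ≤ 1 / t := by
  rw [norm_inv, one_div]
  exact inv_anti₀ ht (hw.trans w.abs_im_le_norm)

/-- For `z` with `Im z > 0`, `a ∈ ℝ`, `b > 0`, the unique solution with positive
imaginary part of `α = 1 / (a - z - b α)` equals
`((a - z) - √((a - z)² - 4b)) / (2b)` for the branch of the square root chosen
so that `Im α > 0`; moreover `|α| ≤ 1 / Im z`. -/
theorem canonical_equation_solution_formula
    (z : ℂ) (hz : 0 < z.im) (a b : ℝ) (hb : 0 < b) (α : ℂ)
    (hα : 0 < α.im ∧ α = ((a : ℂ) - z - (b : ℂ) * α)⁻¹) :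
    (∃ s : ℂ, s ^ 2 = ((a : ℂ) - z) ^ 2 - 4 * (b : ℂ) ∧
      α = (((a : ℂ) - z) - s) / (2 * (b : ℂ))) ∧
    ‖α‖ ≤ 1 / z.im := by
  obtain ⟨him, heq⟩ := hα
  have hα₀ : α ≠ 0 := fun h => by simp [h] at him
  refine ⟨exists_sq_eq_discrim_of_quadratic (by exact_mod_cast hb.ne')
    (quadratic_of_eq_inv_sub_mul hα₀ heq), ?_⟩
  have hden_im : ((a : ℂ) - z - (b : ℂ) * α).im = -z.im - b * α.im := by simp
  have hbound : z.im ≤ |((a : ℂ) - z - (b : ℂ) * α).im| := by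
    rw [hden_im, abs_of_neg (by nlinarith)]
    nlinarith
  rw [heq]
  exact Complex.norm_inv_le_of_le_abs_im hz hbound
end
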